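/- Let U = (H ⊗ I₂ ⊗ I₂) · (CN ⊗ I₂) ∈ M₈(ℂ), acting on three qubits ordered r, q₁, q₂ (so CN acts on (r, q₁) and H on r). For every matrix A ∈ M₂(ℂ) and every j ∈ {0,1,2,3}, writing j = 2·j₁ + j₂ with j₁, j₂ ∈ {0,1} and letting P_j = [|j₁⟩ ⊗ |j₂⟩] ∈ M₄(ℂ) be the projection onto the computational basis state |j₁ j₂⟩ of the first two qubits, one has (P_j ⊗ I₂) · U · (A ⊗ [|Ψ⟩]) · U† · (P_j ⊗ I₂) = (1/4) · P_j ⊗ (σ^j · A · (σ^j)†). (This is the per-measurement-outcome correctness computation underlying the quantum teleportation protocol: after the measurement outcome j, applying the Pauli correction σ^j on qubit q₂ recovers the state A.) -/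
import Mathlib


open Matrix
open scoped Kronecker

noncomputable section

/-- The computational basis vectors `|0⟩, |1⟩` of `ℂ²`. -/
def ket (b : Fin 2) : Fin 2 → ℂ := fun i => if i = b then 1 else 0

/-- The tensor product of vectors. -/
def tens {m n : Type*} (ψ : m → ℂ) (φ : n → ℂ) : m × n → ℂ := fun p => ψ p.1 * φ p.2

/-- The outer product `[ψ] = ψ ψ†`. -/
def outer {m : Type*} (ψ : m → ℂ) : Matrix m m ℂ := Matrix.vecMulVec ψ (star ψ)

/-- The Hadamard matrix. -/
def Hmat : Matrix (Fin 2) (Fin 2) ℂ := (Real.sqrt 2 : ℂ)⁻¹ • !![1, 1; 1, -1]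

/-- The Pauli matrices `σ⁰, σ¹, σ², σ³`. -/
def pauli : Fin 4 → Matrix (Fin 2) (Fin 2) ℂ
  | 0 => 1
  | 1 => !![0, 1; 1, 0]
  | 2 => !![1, 0; 0, -1]
  | 3 => !![0, -Complex.I; Complex.I, 0]

/-- The binary pairing `(b₁, b₂) ↦ 2·b₁ + b₂`. -/
def bin (b₁ b₂ : Fin 2) : Fin 4 := ⟨2 * b₁.val + b₂.val, by omega⟩

/-- The controlled-not matrix, as a 4×4 matrix. -/
def CN4 : Matrix (Fin 4) (Fin 4) ℂ :=
  !![1,0,0,0; 0,1,0,0; 0,0,0,1; 0,0,1,0]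

/-- The controlled-not matrix acting on `ℂ² ⊗ ℂ²`, via the pairing `(b₁,b₂) ↦ 2b₁+b₂`. -/
def CN : Matrix (Fin 2 × Fin 2) (Fin 2 × Fin 2) ℂ :=
  Matrix.of fun p q => CN4 (bin p.1 p.2) (bin q.1 q.2)

/-- The maximally entangled state `|Ψ⟩ = (|00⟩ + |11⟩)/√2`. -/
def psi : Fin 2 × Fin 2 → ℂ :=
  (Real.sqrt 2 : ℂ)⁻¹ • (tens (ket 0) (ket 0) + tens (ket 1) (ket 1))

end

noncomputable section
-- conjTranspose of kronecker
lemma kron_conjT {l m n p : Type*} (A : Matrix l m ℂ) (B : Matrix n p ℂ) :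
    (A ⊗ₖ B)ᴴ = Aᴴ ⊗ₖ Bᴴ := by
  ext ⟨i, j⟩ ⟨k, l⟩
  simp [Matrix.conjTranspose_apply]

lemma outer_conjT {m : Type*} (ψ : m → ℂ) : (outer ψ)ᴴ = outer ψ := by
  ext i j
  simp [outer, Matrix.conjTranspose_apply, Matrix.vecMulVec_apply, mul_comm]

lemma outer_mul {m n : Type*} [Fintype m] (ψ : m → ℂ) (G : Matrix m n ℂ) :
    outer ψ * G = Matrix.vecMulVec ψ ((star ψ) ᵥ* G) := by
  ext i j
  simp [outer, Matrix.mul_apply, Matrix.vecMulVec_apply, Matrix.vecMul, dotProduct,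
    Finset.mul_sum, mul_assoc]

lemma sandwich (ψ w : Fin 2 × Fin 2 → ℂ)
    (M : Matrix ((Fin 2 × Fin 2) × Fin 2) ((Fin 2 × Fin 2) × Fin 2) ℂ) :
    (Matrix.vecMulVec ψ w ⊗ₖ (1 : Matrix (Fin 2) (Fin 2) ℂ)) * M *
      ((Matrix.vecMulVec ψ w)ᴴ ⊗ₖ (1 : Matrix (Fin 2) (Fin 2) ℂ)) =
    outer ψ ⊗ₖ (Matrix.of fun c f =>
      ∑ k : Fin 2 × Fin 2, ∑ l : Fin 2 × Fin 2, w k * star (w l) * M (k, c) (l, f)) := by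
  ext ⟨p, c⟩ ⟨q, f⟩
  simp only [Matrix.mul_apply, Matrix.kroneckerMap_apply, Matrix.vecMulVec_apply,
    Matrix.conjTranspose_apply, Matrix.one_apply, Fintype.sum_prod_type, Matrix.of_apply,
    outer, Pi.star_apply, star_mul']
  simp only [mul_ite, ite_mul, mul_one, mul_zero, one_mul, zero_mul,
    Finset.sum_ite_eq, Finset.sum_ite_eq', Finset.mem_univ, if_true]
  simp only [Fin.sum_univ_two]
  ring


set_option maxHeartbeats 1000000 in
theorem teleportation_outcome (A : Matrix (Fin 2) (Fin 2) ℂ) (j₁ j₂ : Fin 2) :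
    (outer (tens (ket j₁) (ket j₂)) ⊗ₖ (1 : Matrix (Fin 2) (Fin 2) ℂ)) *
        (((Hmat ⊗ₖ (1 : Matrix (Fin 2) (Fin 2) ℂ)) ⊗ₖ (1 : Matrix (Fin 2) (Fin 2) ℂ)) *
          (CN ⊗ₖ (1 : Matrix (Fin 2) (Fin 2) ℂ))) *
        (Matrix.reindex (Equiv.prodAssoc (Fin 2) (Fin 2) (Fin 2)).symm
          (Equiv.prodAssoc (Fin 2) (Fin 2) (Fin 2)).symm (A ⊗ₖ outer psi)) *
        (((Hmat ⊗ₖ (1 : Matrix (Fin 2) (Fin 2) ℂ)) ⊗ₖ (1 : Matrix (Fin 2) (Fin 2) ℂ)) *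
          (CN ⊗ₖ (1 : Matrix (Fin 2) (Fin 2) ℂ)))ᴴ *
        (outer (tens (ket j₁) (ket j₂)) ⊗ₖ (1 : Matrix (Fin 2) (Fin 2) ℂ)) =
      ((1 : ℂ) / 4) •
        (outer (tens (ket j₁) (ket j₂)) ⊗ₖ (pauli (bin j₁ j₂) * A * (pauli (bin j₁ j₂))ᴴ)) := by
  have hG : ((Hmat ⊗ₖ (1 : Matrix (Fin 2) (Fin 2) ℂ)) ⊗ₖ (1 : Matrix (Fin 2) (Fin 2) ℂ)) *
      (CN ⊗ₖ (1 : Matrix (Fin 2) (Fin 2) ℂ)) =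
      ((Hmat ⊗ₖ (1 : Matrix (Fin 2) (Fin 2) ℂ)) * CN) ⊗ₖ (1 : Matrix (Fin 2) (Fin 2) ℂ) := by
    rw [← Matrix.mul_kronecker_mul, Matrix.one_mul]
  set ψ := tens (ket j₁) (ket j₂) with hψ
  set G := (Hmat ⊗ₖ (1 : Matrix (Fin 2) (Fin 2) ℂ)) * CN with hGdef
  set w := (star ψ) ᵥ* G with hw
  set M := Matrix.reindex (Equiv.prodAssoc (Fin 2) (Fin 2) (Fin 2)).symm
    (Equiv.prodAssoc (Fin 2) (Fin 2) (Fin 2)).symm (A ⊗ₖ outer psi) with hM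
  have h1 : (outer ψ ⊗ₖ (1 : Matrix (Fin 2) (Fin 2) ℂ)) *
      (G ⊗ₖ (1 : Matrix (Fin 2) (Fin 2) ℂ)) =
      Matrix.vecMulVec ψ w ⊗ₖ (1 : Matrix (Fin 2) (Fin 2) ℂ) := by
    rw [← Matrix.mul_kronecker_mul, Matrix.one_mul, outer_mul]
  have h2 : (G ⊗ₖ (1 : Matrix (Fin 2) (Fin 2) ℂ))ᴴ *
      (outer ψ ⊗ₖ (1 : Matrix (Fin 2) (Fin 2) ℂ)) =
      (Matrix.vecMulVec ψ w ⊗ₖ (1 : Matrix (Fin 2) (Fin 2) ℂ))ᴴ := by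
    rw [kron_conjT, kron_conjT, Matrix.conjTranspose_one, ← Matrix.mul_kronecker_mul,
      Matrix.one_mul]
    congr 1
    conv_lhs => rw [← outer_conjT ψ]
    rw [← Matrix.conjTranspose_mul, outer_mul]
  rw [hG, h1, mul_assoc (Matrix.vecMulVec ψ w ⊗ₖ (1 : Matrix (Fin 2) (Fin 2) ℂ) * M), h2, kron_conjT, Matrix.conjTranspose_one, sandwich]
  have hN : (Matrix.of fun c f =>
      ∑ k : Fin 2 × Fin 2, ∑ l : Fin 2 × Fin 2, w k * star (w l) * M (k, c) (l, f)) =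
      ((1 : ℂ) / 4) • (pauli (bin j₁ j₂) * A * (pauli (bin j₁ j₂))ᴴ) := by
    have hs4 : (((Real.sqrt 2 : ℝ) : ℂ))⁻¹ ^ 4 = 1 / 4 := by
      have h4 : (((Real.sqrt 2 : ℝ) : ℂ)) ^ 4 = 4 := by
        have hr : (Real.sqrt 2) ^ 4 = 4 := by
          rw [show 4 = 2 * 2 from rfl, pow_mul, Real.sq_sqrt (by norm_num)]; norm_num
        rw [← Complex.ofReal_pow, hr]; norm_num
      rw [inv_pow, h4]; norm_num
    fin_cases j₁ <;> fin_cases j₂ <;> ext c f <;> fin_cases c <;> fin_cases f <;>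
    · simp [hw, hψ, hGdef, hM, Matrix.vecMul, dotProduct, Fintype.sum_prod_type,
        Fin.sum_univ_two, ket, tens, outer, Hmat, CN, CN4, bin, psi, pauli,
        Matrix.mul_apply, Matrix.vecMulVec_apply, Matrix.one_apply,
        Matrix.submatrix_apply, Equiv.prodAssoc]
      ring_nf
      simp only [hs4, Complex.I_sq]
      try ring
  rw [hN, Matrix.kronecker_smul]
end
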